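/- Let α be a real number and let n, i be nonnegative integers with i ≤ n. Then s(n,i,α) = Σ_{k=0}^{n-i} C(n,k)·(-α)_k·s(n-k,i), where C(n,k) is the binomial coefficient. -/

import Mathlib

/-- Non-central Stirling numbers of the first kind `s(n, k, α)`. -/
noncomputable def ncStirling : ℕ → ℕ → ℝ → ℝ
  | 0, 0, _ => 1
  | 0, _ + 1, _ => 0
  | n + 1, 0, α => (-α - n) * ncStirling n 0 α
  | n + 1, k + 1, α => ncStirling n k α + (-α - n) * ncStirling n (k + 1) α

/-- Signed Stirling numbers of the first kind `s(n, k)`. -/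
def stirling1 : ℕ → ℕ → ℤ
  | 0, 0 => 1
  | 0, _ + 1 => 0
  | n + 1, 0 => -(n : ℤ) * stirling1 n 0
  | n + 1, k + 1 => stirling1 n k - (n : ℤ) * stirling1 n (k + 1)

/-- Falling factorial `(β)_i = β (β-1) ⋯ (β-i+1)`, with `(β)_0 = 1`. -/
noncomputable def fall (β : ℝ) (i : ℕ) : ℝ := ∏ j ∈ Finset.range i, (β - j)

/-!
`s(n, k, α)` is the coefficient of `x^k` in the shifted falling factorial `(x - α)_n`, and
`s(n, k) = s(n, k, 0)` that of `x^k` in `(x)_n`. The Chu–Vandermonde identity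
`(x + β)_n = ∑_k C(n, k) (β)_k (x)_{n-k}` with `β = -α` then gives the formula on comparing
coefficients of `x^i`; the terms with `n - k < i` vanish because `(x)_{n-k}` has degree `n - k`.
-/

open Polynomial Finset

theorem ncStirling_zero_right : ∀ n k : ℕ, ncStirling n k 0 = stirling1 n k
  | 0, 0 => by simp [ncStirling, stirling1]
  | 0, _ + 1 => by simp [ncStirling, stirling1]
  | n + 1, 0 => by simp [ncStirling, stirling1, ncStirling_zero_right n 0]
  | n + 1, k + 1 => by
      simp [ncStirling, stirling1, ncStirling_zero_right n k, ncStirling_zero_right n (k + 1)]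
      ring

theorem coeff_descPochhammer_comp_X_sub_C (α : ℝ) :
    ∀ n k : ℕ, ((descPochhammer ℝ n).comp (X - C α)).coeff k = ncStirling n k α
  | 0, 0 => by simp [ncStirling]
  | 0, _ + 1 => by simp [ncStirling, coeff_one]
  | n + 1, k => by
    have hsucc : (descPochhammer ℝ (n + 1)).comp (X - C α) =
        (descPochhammer ℝ n).comp (X - C α) * (X - C (α + n)) := by
      rw [descPochhammer_succ_right, mul_comp, sub_comp, X_comp, natCast_comp, C_add,
        ← C_eq_natCast]
      ring
    rcases k with _ | k
    · rw [hsucc, mul_coeff_zero, coeff_descPochhammer_comp_X_sub_C α n 0, ncStirling]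
      simp
      ring
    · rw [hsucc, coeff_mul_X_sub_C, coeff_descPochhammer_comp_X_sub_C α n,
        coeff_descPochhammer_comp_X_sub_C α n, ncStirling]
      ring

theorem coeff_descPochhammer (n k : ℕ) : (descPochhammer ℝ n).coeff k = stirling1 n k := by
  simpa [ncStirling_zero_right] using coeff_descPochhammer_comp_X_sub_C 0 n k

theorem stirling1_eq_zero_of_lt {n k : ℕ} (h : n < k) : stirling1 n k = 0 := by
  have := coeff_descPochhammer n k
  rw [coeff_eq_zero_of_natDegree_lt (by simpa using h)] at this
  exact_mod_cast this.symm

theorem descPochhammer_smeval_eq_comp {R : Type*} [CommRing R] (p : R[X]) (n : ℕ) :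
    (descPochhammer ℤ n).smeval p = (descPochhammer R n).comp p := by
  rw [← aeval_eq_smeval, comp_eq_aeval, ← descPochhammer_map (algebraMap ℤ R),
    aeval_map_algebraMap]

theorem descPochhammer_comp_X_add_C {R : Type*} [CommRing R] (n : ℕ) (b : R) :
    (descPochhammer R n).comp (X + C b) = ∑ k ∈ range (n + 1),
      (n.choose k : R[X]) * C ((descPochhammer R k).eval b) * descPochhammer R (n - k) := by
  rw [← descPochhammer_smeval_eq_comp, add_comm, Ring.descPochhammer_smeval_add n (Commute.all _ _),
    Nat.sum_antidiagonal_eq_sum_range_succ_mk]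
  simp [descPochhammer_smeval_eq_comp, mul_assoc]

theorem fall_eq_eval_descPochhammer (β : ℝ) (k : ℕ) : fall β k = (descPochhammer ℝ k).eval β :=
  (descPochhammer_eval_eq_prod_range k β).symm

theorem ncStirling_eq_sum_general (α : ℝ) (n i : ℕ) :
    ncStirling n i α = ∑ k ∈ Finset.range (n - i + 1),
      (n.choose k : ℝ) * fall (-α) k * (stirling1 (n - k) i : ℝ) := by
  have hfull : ncStirling n i α = ∑ k ∈ range (n + 1),
      (n.choose k : ℝ) * fall (-α) k * (stirling1 (n - k) i : ℝ) := by
    rw [← coeff_descPochhammer_comp_X_sub_C, sub_eq_add_neg, ← C_neg, descPochhammer_comp_X_add_C,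
      finsetSum_coeff]
    refine sum_congr rfl fun k _ => ?_
    rw [← C_eq_natCast, ← C_mul, coeff_C_mul, coeff_descPochhammer, fall_eq_eval_descPochhammer]
  rw [hfull]
  refine (sum_subset (range_subset_range.mpr (by omega)) fun k hk hk' => ?_).symm
  simp only [mem_range] at hk hk'
  simp [stirling1_eq_zero_of_lt (show n - k < i by omega)]

theorem ncStirling_eq_sum (α : ℝ) (n i : ℕ) (h : i ≤ n) :
    ncStirling n i α = ∑ k ∈ Finset.range (n - i + 1),
      (n.choose k : ℝ) * fall (-α) k * (stirling1 (n - k) i : ℝ) :=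
  ncStirling_eq_sum_general α n i
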